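/- arXiv:1703.02342 — 2 statements merged into one kernel-verified Lean document; each statement's English description precedes it below -/
import Mathlib

section
/- For the Gaussian CDF Φ(x) = ∫_{-∞}^x e^{-t²/2}/√(2π) dt and any ε ∈ (0, 1/2], the inverse satisfies |Φ⁻¹(ε)| ≤ 2√(log₂(1/(2ε))). -/
open MeasureTheory Real Set

namespace GaussAux

noncomputable def f (t : ℝ) : ℝ := Real.exp (-t ^ 2 / 2) / Real.sqrt (2 * Real.pi)

lemma sqrt2pi_pos : 0 < Real.sqrt (2 * Real.pi) :=
  Real.sqrt_pos.mpr (by positivity)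

lemma f_pos (t : ℝ) : 0 < f t := div_pos (Real.exp_pos _) sqrt2pi_pos

lemma exp_eq : (fun t : ℝ => Real.exp (-t ^ 2 / 2)) = fun t => Real.exp (-(1/2 : ℝ) * t ^ 2) := by
  funext t; ring_nf

lemma f_int : Integrable f := by
  unfold f
  rw [show (fun t : ℝ => Real.exp (-t ^ 2 / 2) / Real.sqrt (2 * Real.pi))
      = fun t => Real.exp (-(1/2 : ℝ) * t ^ 2) / Real.sqrt (2 * Real.pi) by
    funext t; ring_nf]
  exact (integrable_exp_neg_mul_sq (by norm_num)).div_const _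

lemma f_total : ∫ t, f t = 1 := by
  unfold f
  rw [integral_div, show (fun t : ℝ => Real.exp (-t ^ 2 / 2))
      = fun t => Real.exp (-(1/2 : ℝ) * t ^ 2) by funext t; ring_nf]
  rw [show ∫ t : ℝ, Real.exp (-(1/2 : ℝ) * t ^ 2) = Real.sqrt (Real.pi / (1/2)) from
    integral_gaussian (1/2)]
  rw [show Real.pi / (1/2 : ℝ) = 2 * Real.pi by ring]
  exact div_self sqrt2pi_pos.ne'

lemma f_even (t : ℝ) : f (-t) = f t := by unfold f; rw [neg_pow]; ring_nf

lemma f_half : ∫ t in Iic (0:ℝ), f t = 1 / 2 := by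
  have hsymm : ∫ t in Iic (0:ℝ), f t = ∫ t in Ioi (0:ℝ), f t := by
    rw [← neg_zero, ← integral_comp_neg_Iic, neg_zero]
    exact setIntegral_congr_fun measurableSet_Iic fun x _ => (f_even x).symm
  have hadd := intervalIntegral.integral_Iic_add_Ioi (b := (0:ℝ)) f_int.integrableOn f_int.integrableOn
  rw [f_total] at hadd
  linarith [hsymm, hadd]

lemma f_shift (c d : ℝ) : ∫ t in Iic c, f (t + d) = ∫ t in Iic (c + d), f t := by
  have A : MeasurableEmbedding fun x : ℝ => x + d :=
    (Homeomorph.addRight d).isClosedEmbedding.measurableEmbedding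
  have h := A.setIntegral_map (μ := volume) f (Iic (c + d))
  rw [map_add_right_eq_self (volume : Measure ℝ)] at h
  rw [h]
  congr 1
  ext x
  simp

lemma tail_bound {y : ℝ} (hy : 0 ≤ y) :
    ∫ t in Iic (-y), f t ≤ (1/2) * Real.exp (-y ^ 2 / 2) := by
  have hshift : Integrable fun t => f (t + y) := by
    have : Integrable (f ∘ fun t : ℝ => t + y) := f_int.comp_add_right y
    exact this
  have hle : ∀ t ∈ Iic (-y), f t ≤ Real.exp (-y ^ 2 / 2) * f (t + y) := by
    intro t ht
    simp only [Set.mem_Iic] at ht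
    unfold f
    rw [← mul_div_assoc]
    apply div_le_div_of_nonneg_right ?_ sqrt2pi_pos.le
    rw [← Real.exp_add]
    apply Real.exp_le_exp.mpr
    nlinarith [mul_nonneg hy (neg_nonneg.mpr (by linarith : t + y ≤ 0))]
  calc ∫ t in Iic (-y), f t
      ≤ ∫ t in Iic (-y), Real.exp (-y ^ 2 / 2) * f (t + y) := by
        apply setIntegral_mono_on f_int.integrableOn
          (hshift.const_mul _).integrableOn measurableSet_Iic hle
    _ = Real.exp (-y ^ 2 / 2) * ∫ t in Iic (-y), f (t + y) := by
        rw [integral_const_mul]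
    _ = Real.exp (-y ^ 2 / 2) * (1/2) := by
        rw [f_shift, neg_add_cancel, f_half]
    _ = (1/2) * Real.exp (-y ^ 2 / 2) := by ring

end GaussAux

open GaussAux

/-- For the Gaussian CDF `Φ x = ∫_{-∞}^x e^{-t²/2}/√(2π) dt` and any `ε ∈ (0, 1/2]`,
the inverse satisfies `|Φ⁻¹(ε)| ≤ 2√(log₂(1/(2ε)))`. -/
theorem gaussian_inverse_bound
    (Φ : ℝ → ℝ)
    (hΦ : ∀ x : ℝ, Φ x = ∫ t in Set.Iic x, Real.exp (-t ^ 2 / 2) / Real.sqrt (2 * Real.pi))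
    (ε : ℝ) (hε : 0 < ε) (hε' : ε ≤ 1 / 2) :
    |Function.invFun Φ ε| ≤ 2 * Real.sqrt (Real.logb 2 (1 / (2 * ε))) := by
  have hΦf : ∀ x, Φ x = ∫ t in Iic x, f t := hΦ
  -- strict monotonicity
  have hmono : StrictMono Φ := by
    intro a b hab
    have h := intervalIntegral.integral_Iic_sub_Iic (μ := volume) (f := f)
      f_int.integrableOn f_int.integrableOn (a := a) (b := b)
    have hpos : 0 < ∫ t in a..b, f t :=
      intervalIntegral.intervalIntegral_pos_of_pos f_int.intervalIntegrable f_pos hab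
    rw [hΦf a, hΦf b]
    linarith [h ▸ hpos]
  -- continuity
  have hcont : Continuous Φ := by
    have : Φ = fun x => (∫ t in Iic (0:ℝ), f t) + ∫ t in (0:ℝ)..x, f t := by
      funext x
      have h := intervalIntegral.integral_Iic_sub_Iic (μ := volume) (f := f)
        f_int.integrableOn f_int.integrableOn (a := (0:ℝ)) (b := x)
      rw [hΦf x]; linarith
    rw [this]
    exact continuous_const.add
      (intervalIntegral.continuous_primitive (fun a b => f_int.intervalIntegrable) 0)
  have hΦ0 : Φ 0 = 1 / 2 := by rw [hΦf 0, f_half]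
  -- choose y with Φ (-y) ≤ ε
  set y : ℝ := Real.sqrt (2 * Real.log (1 / (2 * ε))) with hy_def
  have h2ε : 0 < 2 * ε := by linarith
  have h1 : (1:ℝ) ≤ 1 / (2 * ε) := (one_le_div h2ε).mpr (by linarith)
  have hlog : 0 ≤ Real.log (1 / (2 * ε)) := Real.log_nonneg h1
  have hy : 0 ≤ y := Real.sqrt_nonneg _
  have hy2 : y ^ 2 = 2 * Real.log (1 / (2 * ε)) := Real.sq_sqrt (by linarith)
  have hΦy : Φ (-y) ≤ ε := by
    rw [hΦf]
    calc ∫ t in Iic (-y), f t ≤ (1/2) * Real.exp (-y ^ 2 / 2) := tail_bound hy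
      _ = ε := by
          rw [hy2, show -(2 * Real.log (1 / (2 * ε))) / 2 = - Real.log (1 / (2 * ε)) by ring,
            Real.exp_neg, Real.exp_log (by positivity)]
          field_simp
  -- existence of preimage by IVT
  obtain ⟨x, _, hx⟩ : ∃ x ∈ Icc (-y) 0, Φ x = ε := by
    have := intermediate_value_Icc (by linarith : -y ≤ (0:ℝ)) hcont.continuousOn
    exact this ⟨hΦy, by rw [hΦ0]; exact hε'⟩
  have hz : Φ (Function.invFun Φ ε) = ε := Function.invFun_eq ⟨x, hx⟩
  set z := Function.invFun Φ ε with hzdef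
  -- z ≤ 0
  have hz0 : z ≤ 0 := by
    by_contra h
    push_neg at h
    have := hmono h
    rw [hz, hΦ0] at this
    linarith
  -- tail bound at -z
  have htb : ε ≤ (1/2) * Real.exp (-z ^ 2 / 2) := by
    have := tail_bound (y := -z) (by linarith)
    rw [neg_neg, neg_pow] at this
    rw [← hz, hΦf]
    calc ∫ t in Iic z, f t ≤ 1 / 2 * Real.exp (-((-1) ^ 2 * z ^ 2) / 2) := this
      _ = (1/2) * Real.exp (-z ^ 2 / 2) := by norm_num
  -- extract z² bound
  have hexp : 2 * ε ≤ Real.exp (-z ^ 2 / 2) := by linarith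
  have hlog2 : Real.log (2 * ε) ≤ -z ^ 2 / 2 := (Real.log_le_iff_le_exp h2ε).mpr hexp
  have hzsq : z ^ 2 ≤ 2 * Real.log (1 / (2 * ε)) := by
    rw [Real.log_div one_ne_zero h2ε.ne', Real.log_one] at *
    linarith
  -- conclude
  have hL2 : (0:ℝ) < Real.log 2 := Real.log_pos (by norm_num)
  have hL2' : Real.log 2 < 1 := by
    have := Real.log_two_lt_d9; linarith
  have hgoal : z ^ 2 ≤ 4 * (Real.log (1 / (2 * ε)) / Real.log 2) := by
    rw [mul_div_assoc', le_div_iff₀ hL2]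
    nlinarith
  have : |z| ≤ Real.sqrt (4 * (Real.log (1 / (2 * ε)) / Real.log 2)) :=
    Real.abs_le_sqrt hgoal
  calc |z| ≤ Real.sqrt (4 * (Real.log (1 / (2 * ε)) / Real.log 2)) := this
    _ = 2 * Real.sqrt (Real.logb 2 (1 / (2 * ε))) := by
        rw [Real.sqrt_mul (by norm_num), show Real.sqrt 4 = 2 by
          rw [show (4:ℝ) = 2 ^ 2 by norm_num, Real.sqrt_sq (by norm_num)]]
        rfl
end

section
/- Pretty good POVM lemma: Let ρ_A = Σᵢ λᵢ ρ^i_A be a convex mixture of states, and let 𝓐(X) = Σᵢ Pᵢ X Pᵢ ⊗ |i⟩⟨i|_O with 0 < Pᵢ < I and Σᵢ Pᵢ² = I. Define ρ'_{AO} = Σᵢ λᵢ ρ^i_A ⊗ |i⟩⟨i|_O and p_{i|j} = Tr(Pᵢ² ρ^j_A). Then F(ρ'_{AO}, 𝓐(ρ_A)) ≥ (Σᵢ λᵢ p_{i|i})^{3/2}. -/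
open scoped Matrix Kronecker BigOperators ComplexOrder
open Matrix

noncomputable section

namespace QIT

variable {n : Type*} [Fintype n] [DecidableEq n]

/-- Functional calculus for Hermitian matrices (junk value `0` otherwise). -/
def hcfc (A : Matrix n n ℂ) (f : ℝ → ℝ) : Matrix n n ℂ :=
  if h : A.IsHermitian then
    (h.eigenvectorUnitary : Matrix n n ℂ) * Matrix.diagonal ((↑) ∘ f ∘ h.eigenvalues) *
      (star h.eigenvectorUnitary : Matrix n n ℂ)
  else 0

/-- Positive semidefinite square root (junk otherwise). -/
def msqrt (A : Matrix n n ℂ) : Matrix n n ℂ := hcfc A Real.sqrt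

/-- Matrix logarithm on the support (log 0 = 0). -/
def mlog (A : Matrix n n ℂ) : Matrix n n ℂ := hcfc A Real.log

/-- Trace norm. -/
def traceNorm (A : Matrix n n ℂ) : ℝ := ((msqrt (Aᴴ * A)).trace).re

/-- Fidelity `‖√ρ√σ‖₁`. -/
def fidelity (ρ σ : Matrix n n ℂ) : ℝ := traceNorm (msqrt ρ * msqrt σ)

/-- Purified distance. -/
def purifiedDist (ρ σ : Matrix n n ℂ) : ℝ := Real.sqrt (1 - (fidelity ρ σ) ^ 2)

/-- A density matrix. -/
def IsState (ρ : Matrix n n ℂ) : Prop := ρ.PosSemidef ∧ ρ.trace = 1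

/-- Max-relative entropy (base 2). -/
def Dmax (ρ σ : Matrix n n ℂ) : ℝ := sInf {l : ℝ | ((2 : ℝ) ^ l • σ - ρ).PosSemidef}

/-- Smooth max-relative entropy. -/
def DmaxSmooth (ε : ℝ) (ρ σ : Matrix n n ℂ) : ℝ :=
  sInf {x : ℝ | ∃ ρ' : Matrix n n ℂ, IsState ρ' ∧ purifiedDist ρ' ρ ≤ ε ∧ x = Dmax ρ' σ}

/-- Umegaki relative entropy, in bits. -/
def relEnt (ρ σ : Matrix n n ℂ) : ℝ := ((ρ * (mlog ρ - mlog σ)).trace).re / Real.log 2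

/-- Partial trace over the second factor. -/
def ptraceRight {α β : Type*} [Fintype β] (M : Matrix (α × β) (α × β) ℂ) : Matrix α α ℂ :=
  Matrix.of fun i j => ∑ b, M (i, b) (j, b)

/-- Partial trace over the first factor. -/
def ptraceLeft {α β : Type*} [Fintype α] (M : Matrix (α × β) (α × β) ℂ) : Matrix β β ℂ :=
  Matrix.of fun i j => ∑ a, M (a, i) (a, j)

end QIT

open QIT

/-!
Both states are block diagonal in the classical register, so the fidelity is the sum of the
block fidelities `F(λᵢ ρᵢ, Pᵢ ρ Pᵢ)`. With `R = √(λᵢ ρᵢ)`, the bound `λᵢ ρᵢ ≤ ρ` gives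
`R Pᵢ ρ Pᵢ R ≥ (R Pᵢ R)²`, so operator monotonicity of the square root yields
`F(λᵢ ρᵢ, Pᵢ ρ Pᵢ) ≥ Tr(R Pᵢ R) = λᵢ Tr(Pᵢ ρᵢ) ≥ λᵢ Tr(Pᵢ² ρᵢ)`, the last step because
`0 ≤ Pᵢ ≤ 1`. Hence the fidelity is at least `s = Σᵢ λᵢ p_{i|i} ∈ [0, 1]`, which dominates `s^{3/2}`.
-/

open scoped MatrixOrder

namespace QIT

lemma re_trace_mono {n : Type*} [Fintype n] {A B : Matrix n n ℂ} (h : A ≤ B) :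
    A.trace.re ≤ B.trace.re := by
  have := (Complex.nonneg_iff.mp (Matrix.le_iff.mp h).trace_nonneg).1
  rwa [Matrix.trace_sub, Complex.sub_re, sub_nonneg] at this

lemma sum_kronecker_single_eq_blockDiagonal {n ι : Type*} [Fintype ι] [DecidableEq ι]
    (A : ι → Matrix n n ℂ) :
    ∑ i, A i ⊗ₖ Matrix.single i i (1 : ℂ) = Matrix.blockDiagonal A := by
  ext ⟨a, i⟩ ⟨b, j⟩
  simp [Matrix.sum_apply, Matrix.blockDiagonal_apply, Matrix.single_apply, ite_and, eq_comm]

section SingleSystem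

variable {n : Type*} [Fintype n] [DecidableEq n]

lemma hcfc_eq_cfc {A : Matrix n n ℂ} (hA : A.IsHermitian) (f : ℝ → ℝ) : hcfc A f = cfc f A := by
  rw [hA.cfc_eq, hcfc, dif_pos hA, Matrix.IsHermitian.cfc, Unitary.conjStarAlgAut_apply]; rfl

lemma msqrt_eq_sqrt {A : Matrix n n ℂ} (hA : 0 ≤ A) : msqrt A = CFC.sqrt A := by
  rw [CFC.sqrt_eq_real_sqrt A hA, cfcₙ_eq_cfc, msqrt, hcfc_eq_cfc hA.posSemidef.1]

lemma msqrt_isHermitian (A : Matrix n n ℂ) : (msqrt A).IsHermitian := by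
  by_cases hA : A.IsHermitian
  · rw [msqrt, hcfc_eq_cfc hA]
    exact cfc_predicate _ A
  · rw [msqrt, hcfc, dif_neg hA]
    exact Matrix.isHermitian_zero

lemma msqrt_nonneg {A : Matrix n n ℂ} (hA : 0 ≤ A) : 0 ≤ msqrt A :=
  msqrt_eq_sqrt hA ▸ CFC.sqrt_nonneg A

lemma msqrt_mul_msqrt_self {A : Matrix n n ℂ} (hA : 0 ≤ A) : msqrt A * msqrt A = A :=
  msqrt_eq_sqrt hA ▸ CFC.sqrt_mul_sqrt_self A

lemma msqrt_mul_self {A : Matrix n n ℂ} (hA : 0 ≤ A) : msqrt (A * A) = A := by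
  rw [msqrt_eq_sqrt (IsSelfAdjoint.of_nonneg hA).mul_self_nonneg, CFC.sqrt_mul_self A]

open scoped Matrix.Norms.L2Operator in
lemma re_trace_msqrt_mono {A B : Matrix n n ℂ} (hA : 0 ≤ A) (hAB : A ≤ B) :
    (msqrt A).trace.re ≤ (msqrt B).trace.re := by
  rw [msqrt_eq_sqrt hA, msqrt_eq_sqrt (hA.trans hAB)]
  exact re_trace_mono (CFC.sqrt_le_sqrt A B hAB)

lemma re_trace_mul_le_re_trace_mul {A B X : Matrix n n ℂ} (hAB : A ≤ B) (hX : 0 ≤ X) :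
    (A * X).trace.re ≤ (B * X).trace.re := by
  have hcyc (C : Matrix n n ℂ) : (C * X).trace = (msqrt X * C * msqrt X).trace := by
    rw [Matrix.trace_mul_cycle, msqrt_mul_msqrt_self hX, Matrix.trace_mul_comm]
  rw [hcyc, hcyc]
  exact re_trace_mono ((msqrt_isHermitian X).isSelfAdjoint.conjugate_le_conjugate hAB)

lemma re_trace_mul_mem_Icc {P ρ : Matrix n n ℂ} (h0 : 0 ≤ P) (h1 : P ≤ 1) (hρ : IsState ρ) :
    (P * ρ).trace.re ∈ Set.Icc 0 1 := by
  constructor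
  · simpa using re_trace_mul_le_re_trace_mul h0 hρ.1.nonneg
  · simpa [hρ.2] using re_trace_mul_le_re_trace_mul h1 hρ.1.nonneg

lemma mul_self_le_self {P : Matrix n n ℂ} (h0 : 0 ≤ P) (h1 : P ≤ 1) : P * P ≤ P := by
  obtain ⟨Q, hQ, rfl⟩ : ∃ Q : Matrix n n ℂ, IsSelfAdjoint Q ∧ Q * Q = P :=
    ⟨msqrt P, (msqrt_isHermitian P).isSelfAdjoint, msqrt_mul_msqrt_self h0⟩
  rw [← sub_nonneg]
  convert hQ.conjugate_nonneg (sub_nonneg.mpr h1) using 1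
  noncomm_ring

lemma trace_cfc_eq_of_charpoly_eq {A B : Matrix n n ℂ} (hA : A.IsHermitian) (hB : B.IsHermitian)
    (h : A.charpoly = B.charpoly) (f : ℝ → ℝ) : (cfc f A).trace = (cfc f B).trace := by
  cases isEmpty_or_nonempty n
  · simp [Matrix.trace]
  rw [Matrix.trace_eq_neg_charpoly_coeff, Matrix.trace_eq_neg_charpoly_coeff, hA.charpoly_cfc_eq,
    hB.charpoly_cfc_eq, (Matrix.IsHermitian.eigenvalues_eq_eigenvalues_iff hA hB).2 h]

lemma traceNorm_conjTranspose (A : Matrix n n ℂ) : traceNorm Aᴴ = traceNorm A := by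
  have hAAH := Matrix.isHermitian_mul_conjTranspose_self A
  have hAHA := Matrix.isHermitian_conjTranspose_mul_self A
  rw [traceNorm, traceNorm, Matrix.conjTranspose_conjTranspose, msqrt, msqrt, hcfc_eq_cfc hAAH,
    hcfc_eq_cfc hAHA, trace_cfc_eq_of_charpoly_eq hAAH hAHA (Matrix.charpoly_mul_comm _ _)]

lemma fidelity_comm (ρ σ : Matrix n n ℂ) : fidelity ρ σ = fidelity σ ρ := by
  rw [fidelity, fidelity, ← traceNorm_conjTranspose, Matrix.conjTranspose_mul,
    (msqrt_isHermitian ρ).eq, (msqrt_isHermitian σ).eq]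

lemma fidelity_eq_re_trace_msqrt {ρ : Matrix n n ℂ} (hρ : 0 ≤ ρ) (σ : Matrix n n ℂ) :
    fidelity ρ σ = (msqrt (msqrt σ * ρ * msqrt σ)).trace.re := by
  rw [fidelity, traceNorm, Matrix.conjTranspose_mul, (msqrt_isHermitian ρ).eq,
    (msqrt_isHermitian σ).eq, mul_assoc, ← mul_assoc (msqrt ρ), msqrt_mul_msqrt_self hρ,
    ← mul_assoc]

lemma re_trace_mul_le_fidelity {ρ σ P : Matrix n n ℂ} (hρ : 0 ≤ ρ) (hP : 0 ≤ P) (hρσ : ρ ≤ σ) :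
    (P * ρ).trace.re ≤ fidelity ρ (P * σ * P) := by
  set R := msqrt ρ
  have hR : IsSelfAdjoint R := (msqrt_isHermitian ρ).isSelfAdjoint
  have hRPR : 0 ≤ R * P * R := hR.conjugate_nonneg hP
  have hsq : (R * P * R) * (R * P * R) = R * (P * ρ * P) * R := by
    rw [← show R * R = ρ from msqrt_mul_msqrt_self hρ]
    simp only [mul_assoc]
  have hle : (R * P * R) * (R * P * R) ≤ R * (P * σ * P) * R :=
    hsq ▸ hR.conjugate_le_conjugate ((IsSelfAdjoint.of_nonneg hP).conjugate_le_conjugate hρσ)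
  calc (P * ρ).trace.re = (R * P * R).trace.re := by
        rw [Matrix.trace_mul_cycle, msqrt_mul_msqrt_self hρ, Matrix.trace_mul_comm]
    _ = (msqrt ((R * P * R) * (R * P * R))).trace.re := by rw [msqrt_mul_self hRPR]
    _ ≤ (msqrt (R * (P * σ * P) * R)).trace.re :=
        re_trace_msqrt_mono (IsSelfAdjoint.of_nonneg hRPR).mul_self_nonneg hle
    _ = fidelity ρ (P * σ * P) := by
        rw [fidelity_comm, fidelity_eq_re_trace_msqrt
          ((IsSelfAdjoint.of_nonneg hP).conjugate_nonneg (hρ.trans hρσ))]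

end SingleSystem

section BlockDiagonal

variable {n ι : Type*} [Fintype n] [DecidableEq n] [Fintype ι] [DecidableEq ι]

lemma blockDiagonal_nonneg {A : ι → Matrix n n ℂ} (hA : ∀ i, 0 ≤ A i) :
    0 ≤ Matrix.blockDiagonal A := by
  have h : Matrix.blockDiagonal A = star (Matrix.blockDiagonal fun i => msqrt (A i)) *
      Matrix.blockDiagonal fun i => msqrt (A i) := by
    rw [Matrix.star_eq_conjTranspose, Matrix.blockDiagonal_conjTranspose,
      ← Matrix.blockDiagonal_mul]
    congr 1
    ext1 i
    rw [(msqrt_isHermitian (A i)).eq, msqrt_mul_msqrt_self (hA i)]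
  exact h ▸ star_mul_self_nonneg _

lemma msqrt_blockDiagonal {A : ι → Matrix n n ℂ} (hA : ∀ i, 0 ≤ A i) :
    msqrt (Matrix.blockDiagonal A) = Matrix.blockDiagonal fun i => msqrt (A i) := by
  rw [msqrt_eq_sqrt (blockDiagonal_nonneg hA)]
  refine CFC.sqrt_unique ?_ (blockDiagonal_nonneg fun i => msqrt_nonneg (hA i))
  rw [← Matrix.blockDiagonal_mul]
  exact congrArg _ (funext fun i => msqrt_mul_msqrt_self (hA i))

lemma traceNorm_blockDiagonal (A : ι → Matrix n n ℂ) :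
    traceNorm (Matrix.blockDiagonal A) = ∑ i, traceNorm (A i) := by
  rw [traceNorm, Matrix.blockDiagonal_conjTranspose, ← Matrix.blockDiagonal_mul,
    msqrt_blockDiagonal fun i => (Matrix.posSemidef_conjTranspose_mul_self (A i)).nonneg,
    Matrix.trace_blockDiagonal, Complex.re_sum]
  rfl

lemma fidelity_blockDiagonal {ρ σ : ι → Matrix n n ℂ} (hρ : ∀ i, 0 ≤ ρ i) (hσ : ∀ i, 0 ≤ σ i) :
    fidelity (Matrix.blockDiagonal ρ) (Matrix.blockDiagonal σ) = ∑ i, fidelity (ρ i) (σ i) := by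
  rw [fidelity, msqrt_blockDiagonal hρ, msqrt_blockDiagonal hσ, ← Matrix.blockDiagonal_mul,
    traceNorm_blockDiagonal]
  rfl

end BlockDiagonal

end QIT

theorem pretty_good_povm_general {dA ι : Type*} [Fintype dA] [DecidableEq dA]
    [Fintype ι] [DecidableEq ι]
    (lam : ι → ℝ) (hlam : ∀ i, 0 ≤ lam i) (hlam1 : ∑ i, lam i = 1)
    (ρ : ι → Matrix dA dA ℂ) (hρ : ∀ i, IsState (ρ i))
    (P : ι → Matrix dA dA ℂ)
    (hPpos : ∀ i, (P i).PosDef) (hPlt : ∀ i, ((1 : Matrix dA dA ℂ) - P i).PosDef)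
    (pc : ι → ι → ℝ) (hpc : ∀ i j, pc i j = ((P i * P i * ρ j).trace).re) :
    fidelity (∑ i, lam i • (ρ i ⊗ₖ Matrix.single i i (1 : ℂ)))
        (∑ i, ((P i * (∑ j, lam j • ρ j) * P i) ⊗ₖ Matrix.single i i (1 : ℂ)))
      ≥ (∑ i, lam i * pc i i) ^ ((3 : ℝ) / 2) := by
  have hP0 i : 0 ≤ P i := (hPpos i).posSemidef.nonneg
  have hP1 i : P i ≤ 1 := (hPlt i).posSemidef
  have hP2 i : P i * P i ≤ P i := mul_self_le_self (hP0 i) (hP1 i)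
  have hlamρ0 i : 0 ≤ lam i • ρ i := smul_nonneg (hlam i) (hρ i).1.nonneg
  have hlamρ_le i : lam i • ρ i ≤ ∑ j, lam j • ρ j :=
    Finset.single_le_sum (fun j _ => hlamρ0 j) (Finset.mem_univ i)
  have hpc_mem i : pc i i ∈ Set.Icc 0 1 := hpc i i ▸ re_trace_mul_mem_Icc
    (IsSelfAdjoint.of_nonneg (hP0 i)).mul_self_nonneg ((hP2 i).trans (hP1 i)) (hρ i)
  set s := ∑ i, lam i * pc i i
  have hs0 : 0 ≤ s := Finset.sum_nonneg fun i _ => mul_nonneg (hlam i) (hpc_mem i).1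
  have hs1 : s ≤ 1 :=
    hlam1 ▸ Finset.sum_le_sum fun i _ => mul_le_of_le_one_right (hlam i) (hpc_mem i).2
  simp_rw [← Matrix.smul_kronecker, sum_kronecker_single_eq_blockDiagonal]
  rw [fidelity_blockDiagonal hlamρ0 fun i => (IsSelfAdjoint.of_nonneg (hP0 i)).conjugate_nonneg
    (Finset.sum_nonneg fun j _ => hlamρ0 j)]
  calc s ^ ((3 : ℝ) / 2) ≤ s := Real.rpow_le_self_of_le_one hs0 hs1 (by norm_num)
    _ ≤ ∑ i, (P i * (lam i • ρ i)).trace.re := Finset.sum_le_sum fun i _ => by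
        simpa [hpc i i, Matrix.trace_smul] using re_trace_mul_le_re_trace_mul (hP2 i) (hlamρ0 i)
    _ ≤ _ := Finset.sum_le_sum fun i _ =>
        re_trace_mul_le_fidelity (hlamρ0 i) (hP0 i) (hlamρ_le i)

/-- Pretty good POVM lemma: for `ρ_A = Σᵢ λᵢ ρ^i_A`, `𝓐(X) = Σᵢ Pᵢ X Pᵢ ⊗ |i⟩⟨i|_O`
with `0 < Pᵢ < I`, `Σᵢ Pᵢ² = I`, and `ρ'_{AO} = Σᵢ λᵢ ρ^i_A ⊗ |i⟩⟨i|_O`,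
`p_{i|j} = Tr(Pᵢ² ρ^j_A)`, we have `F(ρ'_{AO}, 𝓐(ρ_A)) ≥ (Σᵢ λᵢ p_{i|i})^{3/2}`. -/
theorem pretty_good_povm {dA ι : Type*} [Fintype dA] [DecidableEq dA]
    [Fintype ι] [DecidableEq ι]
    (lam : ι → ℝ) (hlam : ∀ i, 0 ≤ lam i) (hlam1 : ∑ i, lam i = 1)
    (ρ : ι → Matrix dA dA ℂ) (hρ : ∀ i, IsState (ρ i))
    (P : ι → Matrix dA dA ℂ)
    (hPpos : ∀ i, (P i).PosDef) (hPlt : ∀ i, ((1 : Matrix dA dA ℂ) - P i).PosDef)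
    (hPsum : ∑ i, P i * P i = 1)
    (pc : ι → ι → ℝ) (hpc : ∀ i j, pc i j = ((P i * P i * ρ j).trace).re) :
    fidelity (∑ i, lam i • (ρ i ⊗ₖ Matrix.single i i (1 : ℂ)))
        (∑ i, ((P i * (∑ j, lam j • ρ j) * P i) ⊗ₖ Matrix.single i i (1 : ℂ)))
      ≥ (∑ i, lam i * pc i i) ^ ((3 : ℝ) / 2) :=
  pretty_good_povm_general lam hlam hlam1 ρ hρ P hPpos hPlt pc hpc
end
end
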